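/- Single-valuedness of the metric projection near a uniformly prox-regular set: let H be a real Hilbert space, η > 0, and let C ⊆ H be a nonempty closed η-prox-regular set. Then there exists ℓ > 0 such that every x ∈ H with d_C(x) < ℓ has a unique nearest point in C: there exists a unique x* ∈ C with ‖x − x*‖ = d_C(x). -/
import Mathlib


open Set Metric MeasureTheory Filter
open scoped RealInnerProductSpace NNReal Topology

noncomputable section

variable {H : Type*} [NormedAddCommGroup H] [InnerProductSpace ℝ H]

/-- The set of nearest points of `y` in `C`. -/
def projSet (C : Set H) (y : H) : Set H :=
  {z | z ∈ C ∧ ‖y - z‖ = Metric.infDist y C}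

/-- The proximal normal cone to `C` at `x`. -/
def proxNormalCone (C : Set H) (x : H) : Set H :=
  {v | ∃ ε : ℝ, 0 < ε ∧ x ∈ projSet C (x + ε • v)}

/-- `C` is `η`-prox-regular (uniformly prox-regular with constant `η`). -/
def IsProxRegular (η : ℝ) (C : Set H) : Prop :=
  ∀ t ∈ Set.Ico (0:ℝ) η, ∀ x ∈ C, ∀ v ∈ proxNormalCone C x, v ≠ 0 →
    x ∈ projSet C (x + t • ‖v‖⁻¹ • v)

/-- `C` is locally prox-regular. -/
def IsLocallyProxRegular (C : Set H) : Prop :=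
  ∀ B : Set H, Bornology.IsBounded B → ∃ η > 0, ∀ t ∈ Set.Ico (0:ℝ) η,
    ∀ x ∈ C ∩ B, ∀ v ∈ proxNormalCone C x, v ≠ 0 →
      x ∈ projSet C (x + t • ‖v‖⁻¹ • v)

lemma normal_ineq {C : Set H} {η : ℝ} (hη : 0 < η) (hprox : IsProxRegular η C)
    {p y : H} (hp : p ∈ projSet C y) {c : H} (hc : c ∈ C) :
    ⟪y - p, c - p⟫ ≤ ‖y - p‖ / η * ‖c - p‖ ^ 2 := by
  by_cases hyp : y = p
  · simp [hyp]
  have hv : y - p ≠ 0 := sub_ne_zero.mpr hyp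
  have hmem : (y - p) ∈ proxNormalCone C p := by
    refine ⟨1, one_pos, ?_⟩
    simpa using hp
  have h2 := hprox (η/2) ⟨by positivity, by linarith⟩ p hp.1 (y - p) hmem hv
  set v := y - p with hvdef
  set u : H := ‖v‖⁻¹ • v with hudef
  have hu : ‖u‖ = 1 := by
    rw [hudef, norm_smul, norm_inv, norm_norm, inv_mul_cancel₀ (norm_ne_zero_iff.mpr hv)]
  have hle : η/2 ≤ ‖(p - c) + (η/2) • u‖ := by
    have h3 : ‖(p + (η/2) • u) - p‖ = Metric.infDist (p + (η/2) • u) C := h2.2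
    have h4 : Metric.infDist (p + (η/2) • u) C ≤ ‖(p + (η/2) • u) - c‖ := by
      simpa [dist_eq_norm] using Metric.infDist_le_dist_of_mem (s := C) (x := p + (η/2) • u) hc
    have h5 : ‖(p + (η/2) • u) - p‖ = η/2 := by
      rw [add_sub_cancel_left, norm_smul, hu, Real.norm_eq_abs, abs_of_pos (by positivity)]
      ring
    have h6 : (p + (η/2) • u) - c = (p - c) + (η/2) • u := by abel
    rw [h6] at h4
    rw [h5] at h3
    linarith
  have hsq : (η/2)^2 ≤ ‖(p - c) + (η/2) • u‖^2 :=
    pow_le_pow_left₀ (by positivity) hle 2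
  have hexp : ‖(p - c) + (η/2) • u‖^2
      = ‖p - c‖^2 + 2 * ((η/2) * ⟪p - c, u⟫) + (η/2)^2 := by
    rw [norm_add_sq_real, real_inner_smul_right, norm_smul, Real.norm_eq_abs,
      abs_of_pos (show (0:ℝ) < η/2 by positivity), hu]
    ring
  have hkey : 0 ≤ ‖p - c‖^2 + η * ⟪p - c, u⟫ := by
    rw [hexp] at hsq; linarith
  have hiu : ⟪p - c, u⟫ = ‖v‖⁻¹ * ⟪p - c, v⟫ := by
    rw [hudef, real_inner_smul_right]
  have hnv : 0 < ‖v‖ := norm_pos_iff.mpr hv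
  -- from hkey : 0 ≤ ‖p-c‖² + η ‖v‖⁻¹ ⟪p-c,v⟫
  have hinv : ‖v‖ * ‖v‖⁻¹ = 1 := mul_inv_cancel₀ hnv.ne'
  have h7 : -⟪p - c, v⟫ ≤ ‖v‖ / η * ‖p - c‖^2 := by
    rw [hiu] at hkey
    have h0 := mul_nonneg hnv.le hkey
    have hrw : ‖v‖ * (‖p - c‖^2 + η * (‖v‖⁻¹ * ⟪p - c, v⟫))
        = ‖v‖ * ‖p - c‖^2 + (‖v‖ * ‖v‖⁻¹) * (η * ⟪p - c, v⟫) := by ring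
    rw [hrw, hinv, one_mul] at h0
    rw [div_mul_eq_mul_div, le_div_iff₀ hη]
    nlinarith
  have h9 : ⟪v, c - p⟫ = -⟪p - c, v⟫ := by
    rw [real_inner_comm, ← inner_neg_left, neg_sub]
  calc ⟪v, c - p⟫ = -⟪p - c, v⟫ := h9
    _ ≤ ‖v‖ / η * ‖p - c‖^2 := h7
    _ = ‖v‖ / η * ‖c - p‖^2 := by rw [norm_sub_rev p c]

lemma proj_dist_le {C : Set H} {η : ℝ} (hη : 0 < η) (hprox : IsProxRegular η C)
    {x₁ x₂ p₁ p₂ : H} (h₁ : p₁ ∈ projSet C x₁) (h₂ : p₂ ∈ projSet C x₂) {r : ℝ}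
    (hr₁ : ‖x₁ - p₁‖ ≤ r) (hr₂ : ‖x₂ - p₂‖ ≤ r) :
    (1 - 2*r/η) * ‖p₁ - p₂‖^2 ≤ ‖x₁ - x₂‖ * ‖p₁ - p₂‖ := by
  have e₁ : ⟪x₁ - p₁, p₂ - p₁⟫ ≤ r/η * ‖p₁ - p₂‖^2 := by
    have := normal_ineq hη hprox h₁ h₂.1
    have hmono : ‖x₁ - p₁‖/η * ‖p₂ - p₁‖^2 ≤ r/η * ‖p₁ - p₂‖^2 := by
      rw [norm_sub_rev p₂ p₁]
      gcongr
    exact this.trans hmono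
  have e₂ : ⟪x₂ - p₂, p₁ - p₂⟫ ≤ r/η * ‖p₁ - p₂‖^2 := by
    have := normal_ineq hη hprox h₂ h₁.1
    have hmono : ‖x₂ - p₂‖/η * ‖p₁ - p₂‖^2 ≤ r/η * ‖p₁ - p₂‖^2 := by
      gcongr
    exact this.trans hmono
  have e₃ : |⟪x₁ - x₂, p₂ - p₁⟫| ≤ ‖x₁ - x₂‖ * ‖p₁ - p₂‖ := by
    have := abs_real_inner_le_norm (x₁ - x₂) (p₂ - p₁)
    rwa [norm_sub_rev p₂ p₁] at this
  have key : ⟪x₁ - p₁, p₂ - p₁⟫ + ⟪x₂ - p₂, p₁ - p₂⟫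
      = ⟪x₁ - x₂, p₂ - p₁⟫ + ‖p₁ - p₂‖^2 := by
    have hw : p₁ - p₂ = -(p₂ - p₁) := by abel
    rw [hw, inner_neg_right, ← sub_eq_add_neg, ← inner_sub_left]
    have hv : (x₁ - p₁) - (x₂ - p₂) = (x₁ - x₂) + (p₂ - p₁) := by abel
    rw [hv, inner_add_left, real_inner_self_eq_norm_sq, norm_neg]
  have h2r : r/η * ‖p₁ - p₂‖^2 + r/η * ‖p₁ - p₂‖^2 = 2*r/η * ‖p₁ - p₂‖^2 := by ring
  have hgoal : (1 - 2*r/η) * ‖p₁ - p₂‖^2 = ‖p₁ - p₂‖^2 - 2*r/η * ‖p₁ - p₂‖^2 := by ring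
  have e₃' := abs_le.mp e₃
  linarith [e₃'.1, e₃'.2]

lemma step_est {C : Set H} {x c₀ c : H} {t ε ε' : ℝ}
    (hc₀C : c₀ ∈ C) (hcC : c ∈ C)
    (ht : 0 < t) (ht1 : t ≤ 1) (hε : 0 ≤ ε) (hε' : 0 ≤ ε')
    (hεR : ε ≤ ‖x - c₀‖)
    (hc₀ : ‖x - c₀‖ ≤ Metric.infDist x C + ε)
    (hc : ‖(x + t • (c₀ - x)) - c‖ ≤ Metric.infDist (x + t • (c₀ - x)) C + ε') :
    ‖c - c₀‖^2 ≤ (2*‖x - c₀‖*(ε+ε') + ε'^2)/t := by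
  set y : H := x + t • (c₀ - x) with hydef
  set a : H := y - c with hadef
  set b : H := x - c₀ with hbdef
  set R : ℝ := ‖x - c₀‖ with hRdef
  have hR0 : 0 ≤ R := norm_nonneg _
  -- h1 : R - ε ≤ ‖a + t • b‖
  have hab : a + t • b = x - c := by
    rw [hadef, hbdef, hydef]; module
  have h1 : R - ε ≤ ‖a + t • b‖ := by
    have hd : Metric.infDist x C ≤ ‖x - c‖ := by
      simpa [dist_eq_norm] using Metric.infDist_le_dist_of_mem (s := C) (x := x) hcC
    rw [hab]; linarith
  -- h3 : ‖a‖ ≤ (1-t)*R + ε'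
  have h3 : ‖a‖ ≤ (1-t)*R + ε' := by
    have hd : Metric.infDist y C ≤ ‖y - c₀‖ := by
      simpa [dist_eq_norm] using Metric.infDist_le_dist_of_mem (s := C) (x := y) hc₀C
    have hyc₀ : ‖y - c₀‖ = (1-t)*R := by
      have : y - c₀ = (1-t) • b := by rw [hydef, hbdef]; module
      rw [this, norm_smul, Real.norm_eq_abs, abs_of_nonneg (by linarith : (0:ℝ) ≤ 1 - t), hRdef]
    calc ‖a‖ ≤ Metric.infDist y C + ε' := hc
      _ ≤ ‖y - c₀‖ + ε' := by linarith
      _ = (1-t)*R + ε' := by rw [hyc₀]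
  have h4 : c - c₀ = (1-t) • b - a := by
    rw [hadef, hbdef, hydef]; module
  have h1sq : (R - ε)^2 ≤ ‖a‖^2 + 2*(t*⟪a, b⟫) + t^2*R^2 := by
    have he : ‖a + t • b‖^2 = ‖a‖^2 + 2*(t*⟪a, b⟫) + t^2*R^2 := by
      rw [norm_add_sq_real, real_inner_smul_right, norm_smul, Real.norm_eq_abs, mul_pow, sq_abs,
        hRdef]
    rw [← he]
    exact pow_le_pow_left₀ (by linarith) h1 2
  have h3sq : ‖a‖^2 ≤ ((1-t)*R + ε')^2 := pow_le_pow_left₀ (norm_nonneg _) h3 2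
  have hgoal : ‖c - c₀‖^2 = (1-t)^2*R^2 - 2*((1-t)*⟪a, b⟫) + ‖a‖^2 := by
    rw [h4, norm_sub_sq_real, real_inner_smul_left, norm_smul, Real.norm_eq_abs, mul_pow, sq_abs,
      hRdef, real_inner_comm b a]
  rw [hgoal, le_div_iff₀ ht]
  nlinarith [mul_le_mul_of_nonneg_left h1sq (by linarith : (0:ℝ) ≤ 1 - t),
    mul_le_mul_of_nonneg_left h3sq (le_of_lt ht),
    mul_nonneg (mul_nonneg ht.le hR0) hε, mul_nonneg (mul_nonneg ht.le hR0) hε',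
    mul_nonneg hε hε, sq_nonneg ε']

set_option maxHeartbeats 1200000 in
lemma exists_proj_near [CompleteSpace H] (C : Set H) (hne : C.Nonempty) (hcl : IsClosed C)
    (x : H) {ε : ℝ} (hε : 0 < ε) :
    ∃ y p : H, ‖y - x‖ ≤ ε ∧ p ∈ projSet C y := by
  classical
  -- selection of near-minimizers
  have hsel : ∀ (δ : ℝ), 0 < δ → ∀ z : H, ∃ c, c ∈ C ∧ ‖z - c‖ ≤ Metric.infDist z C + δ := by
    intro δ hδ z
    obtain ⟨c, hcC, hc⟩ := (Metric.infDist_lt_iff hne).mp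
      (lt_add_of_pos_right (Metric.infDist z C) hδ)
    exact ⟨c, hcC, by rw [← dist_eq_norm]; exact hc.le⟩
  set d : ℝ := Metric.infDist x C with hddef
  have hd0 : 0 ≤ d := Metric.infDist_nonneg
  by_cases hcase : d < ε
  · obtain ⟨c, hcC, hc⟩ := (Metric.infDist_lt_iff hne).mp hcase
    refine ⟨c, c, ?_, hcC, ?_⟩
    · rw [norm_sub_rev, ← dist_eq_norm]; exact hc.le
    · rw [sub_self, norm_zero, Metric.infDist_zero_of_mem hcC]
  push_neg at hcase
  -- main construction
  set D : ℝ := d + 2*ε with hDdef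
  have hD0 : 0 < D := by positivity
  choose sel hselC hseld using fun (n : ℕ) (z : H) =>
    hsel ((ε/2) * (16:ℝ)⁻¹^n) (by positivity) z
  set t : ℕ → ℝ := fun n => (ε/4) * (4:ℝ)⁻¹^n / D with htdef
  have ht0 : ∀ n, 0 < t n := fun n => by positivity
  have ht1 : ∀ n, t n ≤ 1 := by
    intro n
    rw [htdef]
    have h1 : (4:ℝ)⁻¹^n ≤ 1 := pow_le_one₀ (by norm_num) (by norm_num)
    rw [div_le_one hD0]
    nlinarith
  set X : ℕ → H := fun n => Nat.rec x (fun n xn => xn + (t n) • (sel n xn - xn)) n with hXdef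
  have hX0 : X 0 = x := rfl
  have hXs : ∀ n, X (n+1) = X n + (t n) • (sel n (X n) - X n) := fun n => rfl
  set c : ℕ → H := fun n => sel n (X n) with hcdef
  -- invariant: distance of X n from x
  have hdist : ∀ n, dist (X n) x ≤ (ε/3) * (1 - (4:ℝ)⁻¹^n) := by
    intro n
    induction n with
    | zero => simp [hX0]
    | succ n ih =>
      have hxn : dist (X n) x ≤ ε/3 := by
        have : (ε/3) * (1 - (4:ℝ)⁻¹^n) ≤ ε/3 := by
          have : (0:ℝ) ≤ (4:ℝ)⁻¹^n := by positivity
          nlinarith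
        linarith
      have hRle : ‖X n - c n‖ ≤ D := by
        have h1 : ‖X n - c n‖ ≤ Metric.infDist (X n) C + (ε/2) * (16:ℝ)⁻¹^n :=
          hseld n (X n)
        have h2 : Metric.infDist (X n) C ≤ d + dist (X n) x := by
          rw [hddef]; exact Metric.infDist_le_infDist_add_dist
        have h3 : (ε/2) * (16:ℝ)⁻¹^n ≤ ε/2 := by
          have : (16:ℝ)⁻¹^n ≤ 1 := pow_le_one₀ (by norm_num) (by norm_num)
          nlinarith
        rw [hDdef]
        linarith
      have hstep : dist (X (n+1)) (X n) ≤ (ε/4) * (4:ℝ)⁻¹^n := by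
        rw [hXs n, dist_eq_norm, add_sub_cancel_left, norm_smul, Real.norm_eq_abs,
          abs_of_pos (ht0 n)]
        have : t n * ‖sel n (X n) - X n‖ = t n * ‖X n - c n‖ := by
          rw [hcdef, norm_sub_rev]
        rw [this]
        calc t n * ‖X n - c n‖ ≤ t n * D := by
              exact mul_le_mul_of_nonneg_left hRle (ht0 n).le
          _ = (ε/4) * (4:ℝ)⁻¹^n := by
              rw [htdef]; field_simp
      calc dist (X (n+1)) x ≤ dist (X (n+1)) (X n) + dist (X n) x := dist_triangle _ _ _
        _ ≤ (ε/4) * (4:ℝ)⁻¹^n + (ε/3) * (1 - (4:ℝ)⁻¹^n) := by linarith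
        _ = (ε/3) * (1 - (4:ℝ)⁻¹^(n+1)) := by rw [pow_succ]; ring
  have hdist' : ∀ n, dist (X n) x ≤ ε/3 := by
    intro n
    have h0 : (0:ℝ) ≤ (4:ℝ)⁻¹^n := by positivity
    have := hdist n
    nlinarith
  -- lower bounds on distances along the sequence
  have hdlow : ∀ n, d - ε/2 ≤ Metric.infDist (X n) C := by
    intro n
    have h2 : d ≤ Metric.infDist (X n) C + dist x (X n) := by
      rw [hddef]; exact Metric.infDist_le_infDist_add_dist
    have h3 : dist x (X n) ≤ ε/3 := by rw [dist_comm]; exact hdist' n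
    linarith
  have hRlow : ∀ n, ε/2 ≤ ‖X n - c n‖ := by
    intro n
    have h1 : Metric.infDist (X n) C ≤ ‖X n - c n‖ := by
      simpa [dist_eq_norm] using
        Metric.infDist_le_dist_of_mem (s := C) (x := X n) (hselC n (X n))
    have := hdlow n
    linarith
  have hRle : ∀ n, ‖X n - c n‖ ≤ D := by
    intro n
    have h1 : ‖X n - c n‖ ≤ Metric.infDist (X n) C + (ε/2) * (16:ℝ)⁻¹^n := hseld n (X n)
    have h2 : Metric.infDist (X n) C ≤ d + dist (X n) x := by
      rw [hddef]; exact Metric.infDist_le_infDist_add_dist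
    have h3 : (ε/2) * (16:ℝ)⁻¹^n ≤ ε/2 := by
      have : (16:ℝ)⁻¹^n ≤ 1 := pow_le_one₀ (by norm_num) (by norm_num)
      nlinarith
    have h4 := hdist' n
    rw [hDdef]
    linarith
  -- step estimate for the c sequence
  set C₁ : ℝ := (2*D*ε + ε^2/4) * (4*D/ε) with hC₁def
  have hC₁0 : 0 ≤ C₁ := by positivity
  have hkey : ∀ n, ‖c (n+1) - c n‖^2 ≤ C₁ * (4:ℝ)⁻¹^n := by
    intro n
    set εn : ℝ := (ε/2) * (16:ℝ)⁻¹^n with hεndef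
    set εn' : ℝ := (ε/2) * (16:ℝ)⁻¹^(n+1) with hεn'def
    have hεn0 : 0 ≤ εn := by positivity
    have hεn'0 : 0 ≤ εn' := by positivity
    have hεnle : εn ≤ ε/2 := by
      rw [hεndef]
      have : (16:ℝ)⁻¹^n ≤ 1 := pow_le_one₀ (by norm_num) (by norm_num)
      nlinarith
    have hεR : εn ≤ ‖X n - c n‖ := le_trans hεnle (hRlow n)
    have hest := step_est (hselC n (X n)) (hselC (n+1) (X (n+1))) (ht0 n) (ht1 n)
      hεn0 hεn'0 hεR (hseld n (X n)) ?hc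
    case hc =>
      rw [← hXs n]
      exact hseld (n+1) (X (n+1))
    · have hest' : ‖c (n+1) - c n‖^2
          ≤ (2*‖X n - c n‖*(εn + εn') + εn'^2) / t n := hest
      refine le_trans hest' ?_
      rw [div_le_iff₀ (ht0 n)]
      have hR := hRle n
      have hεn'le : εn' ≤ εn := by
        rw [hεndef, hεn'def, pow_succ]
        have : (0:ℝ) < (16:ℝ)⁻¹^n := by positivity
        nlinarith
      have h16 : ((16:ℝ)⁻¹)^n = ((4:ℝ)⁻¹^n)^2 := by
        have h0 : (16:ℝ)⁻¹ = (4:ℝ)⁻¹ * (4:ℝ)⁻¹ := by norm_num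
        rw [h0, mul_pow]
        ring
      have htval : t n = (ε/4) * (4:ℝ)⁻¹^n / D := by rw [htdef]
      have hq0 : (0:ℝ) < (4:ℝ)⁻¹^n := by positivity
      have h1 : 2*‖X n - c n‖*(εn + εn') + εn'^2 ≤ (2*D*ε + ε^2/4) * ((4:ℝ)⁻¹^n)^2 := by
        have hnn : 0 ≤ ‖X n - c n‖ := norm_nonneg _
        have e1 : εn + εn' ≤ ε * ((4:ℝ)⁻¹^n)^2 := by
          rw [← h16, hεndef, hεn'def]
          have : (0:ℝ) ≤ (16:ℝ)⁻¹^(n+1) := by positivity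
          have h2 : (16:ℝ)⁻¹^(n+1) ≤ (16:ℝ)⁻¹^n :=
            pow_le_pow_of_le_one (by norm_num) (by norm_num) (Nat.le_succ n)
          nlinarith
        have e2 : εn'^2 ≤ (ε^2/4) * ((4:ℝ)⁻¹^n)^2 := by
          have h2 : εn' ≤ (ε/2) * (4:ℝ)⁻¹^n := by
            rw [hεn'def]
            have h3 : (16:ℝ)⁻¹^(n+1) ≤ (16:ℝ)⁻¹^n :=
              pow_le_pow_of_le_one (by norm_num) (by norm_num) (Nat.le_succ n)
            have h4 : (16:ℝ)⁻¹^n ≤ (4:ℝ)⁻¹^n := by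
              apply pow_le_pow_left₀ (by norm_num) (by norm_num)
            nlinarith
          calc εn'^2 ≤ ((ε/2) * (4:ℝ)⁻¹^n)^2 := pow_le_pow_left₀ hεn'0 h2 2
            _ = (ε^2/4) * ((4:ℝ)⁻¹^n)^2 := by ring
        have e3 : 2*‖X n - c n‖*(εn + εn') ≤ 2*D*(ε * ((4:ℝ)⁻¹^n)^2) := by
          have := mul_le_mul hR e1 (by positivity) hD0.le
          nlinarith [this]
        nlinarith [e3, e2]
      calc 2*‖X n - c n‖*(εn + εn') + εn'^2 ≤ (2*D*ε + ε^2/4) * ((4:ℝ)⁻¹^n)^2 := h1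
        _ = C₁ * (4:ℝ)⁻¹^n * t n := by
            rw [hC₁def, htval]
            field_simp
  -- Cauchy sequence X
  have hstep : ∀ n, dist (X n) (X (n+1)) ≤ (ε/4) * (4:ℝ)⁻¹^n := by
    intro n
    rw [dist_comm, hXs n, dist_eq_norm, add_sub_cancel_left, norm_smul, Real.norm_eq_abs,
      abs_of_pos (ht0 n)]
    have heq : t n * ‖sel n (X n) - X n‖ = t n * ‖X n - c n‖ := by
      rw [norm_sub_rev]
    rw [heq]
    calc t n * ‖X n - c n‖ ≤ t n * D := mul_le_mul_of_nonneg_left (hRle n) (ht0 n).le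
      _ = (ε/4) * (4:ℝ)⁻¹^n := by rw [htdef]; field_simp
  have hXcauchy : CauchySeq X := cauchySeq_of_le_geometric (4:ℝ)⁻¹ (ε/4) (by norm_num) hstep
  obtain ⟨y, hy⟩ := cauchySeq_tendsto_of_complete hXcauchy
  have hccauchy : CauchySeq c := by
    apply cauchySeq_of_le_geometric (2:ℝ)⁻¹ (Real.sqrt C₁) (by norm_num)
    intro n
    have h2 : dist (c n) (c (n+1)) = ‖c (n+1) - c n‖ := by rw [dist_comm, dist_eq_norm]
    rw [h2]
    have hrw : (Real.sqrt C₁ * (2:ℝ)⁻¹^n)^2 = C₁ * ((2:ℝ)⁻¹^n)^2 := by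
      rw [mul_pow, Real.sq_sqrt hC₁0]
    have h4 : ((2:ℝ)⁻¹^n)^2 = (4:ℝ)⁻¹^n := by
      have h5 : (4:ℝ)⁻¹ = 2⁻¹*2⁻¹ := by norm_num
      rw [h5, mul_pow]
      ring
    have hsq : ‖c (n+1) - c n‖^2 ≤ (Real.sqrt C₁ * (2:ℝ)⁻¹^n)^2 := by
      rw [hrw, h4]
      exact hkey n
    have hb : (0:ℝ) ≤ Real.sqrt C₁ * (2:ℝ)⁻¹^n := by positivity
    nlinarith [norm_nonneg (c (n+1) - c n)]
  obtain ⟨p, hp⟩ := cauchySeq_tendsto_of_complete hccauchy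
  have hpC : p ∈ C :=
    hcl.mem_of_tendsto hp (Filter.Eventually.of_forall fun n => hselC n (X n))
  have hyx : ‖y - x‖ ≤ ε := by
    have h1 : Tendsto (fun n => dist (X n) x) atTop (nhds (dist y x)) :=
      hy.dist tendsto_const_nhds
    have h2 : dist y x ≤ ε/3 := le_of_tendsto h1 (Filter.Eventually.of_forall hdist')
    rw [← dist_eq_norm]
    linarith
  refine ⟨y, p, hyx, hpC, ?_⟩
  have h1 : Tendsto (fun n => ‖X n - c n‖) atTop (nhds ‖y - p‖) := (hy.sub hp).norm
  have h2 : Tendsto (fun n => Metric.infDist (X n) C + (ε/2) * (16:ℝ)⁻¹^n) atTop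
      (nhds (Metric.infDist y C + 0)) := by
    apply Tendsto.add
    · exact ((Metric.continuous_infDist_pt C).tendsto y).comp hy
    · have h3 := tendsto_pow_atTop_nhds_zero_of_lt_one
        (by norm_num : (0:ℝ) ≤ 16⁻¹) (by norm_num : (16:ℝ)⁻¹ < 1)
      simpa using h3.const_mul (ε/2)
  have hle : ‖y - p‖ ≤ Metric.infDist y C := by
    have h5 := le_of_tendsto_of_tendsto' h1 h2 (fun n => hseld n (X n))
    simpa using h5
  have hge : Metric.infDist y C ≤ ‖y - p‖ := by
    simpa [dist_eq_norm] using Metric.infDist_le_dist_of_mem (x := y) hpC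
  exact le_antisymm hle hge

theorem projection_singleton_of_prox_regular
    [CompleteSpace H] (C : Set H) (hne : C.Nonempty) (hcl : IsClosed C)
    (η : ℝ) (hη : 0 < η) (hprox : IsProxRegular η C) :
    ∃ ℓ > 0, ∀ x : H, Metric.infDist x C < ℓ →
      ∃! z : H, z ∈ C ∧ ‖x - z‖ = Metric.infDist x C := by
  refine ⟨η/8, by positivity, ?_⟩
  intro x hx
  -- approximating points with projections
  have hky : ∀ k : ℕ, ∃ y p : H, ‖y - x‖ ≤ (η/16) * (2:ℝ)⁻¹^k ∧ p ∈ projSet C y :=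
    fun k => exists_proj_near C hne hcl x (by positivity)
  choose Y P hY hP using hky
  have hpow : ∀ k : ℕ, (2:ℝ)⁻¹^k ≤ 1 := fun k => pow_le_one₀ (by norm_num) (by norm_num)
  have hYx : ∀ k, dist (Y k) x ≤ (η/16) * (2:ℝ)⁻¹^k := by
    intro k
    rw [dist_eq_norm]
    exact hY k
  have hdY : ∀ k, Metric.infDist (Y k) C ≤ 3*η/16 := by
    intro k
    have h1 : Metric.infDist (Y k) C ≤ Metric.infDist x C + dist (Y k) x :=
      Metric.infDist_le_infDist_add_dist
    have h2 : dist (Y k) x ≤ η/16 := by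
      have := hYx k
      nlinarith [hpow k]
    linarith
  have hYP : ∀ k, ‖Y k - P k‖ ≤ 3*η/16 := fun k => by rw [(hP k).2]; exact hdY k
  have hfrac : 1 - 2*(3*η/16)/η = 5/8 := by field_simp; ring
  -- Lipschitz bound between consecutive projections
  have hPP : ∀ j k, ‖P j - P k‖ ≤ (8/5) * ‖Y j - Y k‖ := by
    intro j k
    have h1 := proj_dist_le hη hprox (hP j) (hP k) (hYP j) (hYP k)
    rw [hfrac] at h1
    have hq : (0:ℝ) ≤ ‖P j - P k‖ := norm_nonneg _
    nlinarith [h1, hq, norm_nonneg (Y j - Y k)]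
  have hPstep : ∀ k, dist (P k) (P (k+1)) ≤ (η/5) * (2:ℝ)⁻¹^k := by
    intro k
    have h1 : ‖Y k - Y (k+1)‖ ≤ (η/16) * (2:ℝ)⁻¹^k + (η/16) * (2:ℝ)⁻¹^(k+1) := by
      calc ‖Y k - Y (k+1)‖ = ‖(Y k - x) + (x - Y (k+1))‖ := by rw [sub_add_sub_cancel]
        _ ≤ ‖Y k - x‖ + ‖x - Y (k+1)‖ := norm_add_le _ _
        _ ≤ (η/16) * (2:ℝ)⁻¹^k + (η/16) * (2:ℝ)⁻¹^(k+1) := by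
            rw [norm_sub_rev x (Y (k+1))]
            exact add_le_add (hY k) (hY (k+1))
    have h2 : (2:ℝ)⁻¹^(k+1) ≤ (2:ℝ)⁻¹^k :=
      pow_le_pow_of_le_one (by norm_num) (by norm_num) (Nat.le_succ k)
    rw [dist_eq_norm, norm_sub_rev]
    calc ‖P (k+1) - P k‖ = ‖P k - P (k+1)‖ := by rw [norm_sub_rev]
      _ ≤ (8/5) * ‖Y k - Y (k+1)‖ := hPP k (k+1)
      _ ≤ (η/5) * (2:ℝ)⁻¹^k := by nlinarith [h1, h2]
  have hPcauchy : CauchySeq P := cauchySeq_of_le_geometric (2:ℝ)⁻¹ (η/5) (by norm_num) hPstep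
  obtain ⟨p, hp⟩ := cauchySeq_tendsto_of_complete hPcauchy
  have hpC : p ∈ C := hcl.mem_of_tendsto hp (Filter.Eventually.of_forall fun k => (hP k).1)
  have hYtend : Tendsto Y atTop (nhds x) := by
    rw [tendsto_iff_dist_tendsto_zero]
    apply squeeze_zero (fun k => dist_nonneg) hYx
    have h3 := tendsto_pow_atTop_nhds_zero_of_lt_one
      (by norm_num : (0:ℝ) ≤ 2⁻¹) (by norm_num : (2:ℝ)⁻¹ < 1)
    simpa using h3.const_mul (η/16)
  have hxp : ‖x - p‖ = Metric.infDist x C := by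
    have h1 : Tendsto (fun k => ‖Y k - P k‖) atTop (nhds ‖x - p‖) := (hYtend.sub hp).norm
    have h2 : Tendsto (fun k => ‖Y k - P k‖) atTop (nhds (Metric.infDist x C)) := by
      have h3 : (fun k => ‖Y k - P k‖) = fun k => Metric.infDist (Y k) C :=
        funext fun k => (hP k).2
      rw [h3]
      exact ((Metric.continuous_infDist_pt C).tendsto x).comp hYtend
    exact tendsto_nhds_unique h1 h2
  refine ⟨p, ⟨hpC, hxp⟩, ?_⟩
  intro z hz
  have hzp : z ∈ projSet C x := hz
  have hpp : p ∈ projSet C x := ⟨hpC, hxp⟩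
  set r : ℝ := Metric.infDist x C with hrdef
  have hr0 : 0 ≤ r := Metric.infDist_nonneg
  have h1 := proj_dist_le hη hprox hzp hpp (le_of_eq hz.2) (le_of_eq hxp)
  rw [sub_self, norm_zero, zero_mul] at h1
  have h2 : 0 < 1 - 2*r/η := by
    rw [sub_pos, div_lt_one hη]
    linarith
  have h3 : ‖z - p‖^2 ≤ 0 := by
    by_contra h4
    push_neg at h4
    nlinarith
  have h5 : ‖z - p‖ = 0 := by nlinarith [norm_nonneg (z - p), sq_nonneg ‖z - p‖]
  have := norm_sub_eq_zero_iff.mp h5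
  exact this
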